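/- arXiv:2203.00297 — 2 statements merged into one kernel-verified Lean document; each statement's English description precedes it below -/
import Mathlib

section
/- Let E be a finite-dimensional real normed vector space, let f : E × E → E satisfy the Lipschitz estimate ‖f(a,b) − f(a',b')‖ ≤ L(‖a − a'‖ + ‖b − b'‖) for all a,a',b,b' ∈ E and some constant L ≥ 0, and let Δt > 0. Let u, v : ℝ → E be twice continuously differentiable on [t₀, t₀ + Δt] with ‖u''(τ)‖ ≤ M₂ and ‖v''(τ)‖ ≤ M₂ for all τ ∈ [t₀, t₀ + Δt], and suppose the map φ(τ) = f(u(τ), v(τ)) is twice continuously differentiable on [t₀, t₀ + Δt] with ‖φ''(τ)‖ ≤ M there. Define the explicit-Euler predictors u¹ = u(t₀) + Δt·u'(t₀) and v¹ = v(t₀) + Δt·v'(t₀). Then the predictor–corrector flux value ½(f(u(t₀), v(t₀)) + f(u¹, v¹)) is a second-order accurate approximation of the time-averaged flux: ‖½(f(u(t₀),v(t₀)) + f(u¹,v¹)) − (1/Δt)∫_{t₀}^{t₀+Δt} f(u(τ), v(τ)) dτ‖ ≤ (M/12)·Δt² + (L·M₂/2)·Δt². -/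
/-!
On `[t₀, t₀ + Δt]` with `φ τ = f (u τ, v τ)`, the error splits as
`½ (f (u₁, v₁) - φ (t₀ + Δt)) - (1/Δt) (∫ φ - (Δt/2) (φ t₀ + φ (t₀ + Δt)))`.
The second term is the trapezoid-rule error, `≤ M Δt³ / 12` before dividing by `Δt`; the first
is at most `L / 2` times the explicit-Euler errors
`‖u₁ - u (t₀ + Δt)‖, ‖v₁ - v (t₀ + Δt)‖ ≤ M₂ Δt² / 2`.
Both one-step bounds come from integrating a derivative bound `‖φ'(t)‖ ≤ C (t - a)ⁿ` once or twice,
starting from a function vanishing at `a`.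
-/

open Set intervalIntegral

section

variable {E : Type*} [NormedAddCommGroup E] [NormedSpace ℝ E]

theorem norm_le_of_hasDerivWithinAt_of_norm_le_mul_pow {φ φ' : ℝ → E} {a b C : ℝ} {n : ℕ}
    (hφ : ∀ t ∈ Icc a b, HasDerivWithinAt φ (φ' t) (Icc a b) t) (h0 : φ a = 0)
    (hφ' : ∀ t ∈ Icc a b, ‖φ' t‖ ≤ C * (t - a) ^ n) :
    ∀ t ∈ Icc a b, ‖φ t‖ ≤ C / (n + 1) * (t - a) ^ (n + 1) := by
  have hB (t : ℝ) : HasDerivAt (fun s ↦ C / (n + 1) * (s - a) ^ (n + 1)) (C * (t - a) ^ n) t := by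
    refine ((((hasDerivAt_id' t).sub_const a).pow (n + 1)).const_mul (C / (n + 1))).congr_deriv ?_
    push_cast
    field_simp
  exact image_norm_le_of_norm_deriv_right_le_deriv_boundary
    (fun t ht ↦ (hφ t ht).continuousWithinAt)
    (fun t ht ↦ (hφ t (Ico_subset_Icc_self ht)).mono_of_mem_nhdsWithin (Icc_mem_nhdsGE_of_mem ht))
    (by simp [h0]) hB (fun t ht ↦ hφ' t (Ico_subset_Icc_self ht))

theorem ContDiffOn.hasDerivWithinAt_derivWithin {g : ℝ → E} {s : Set ℝ} {t : ℝ}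
    (hg : ContDiffOn ℝ 2 g s) (hs : UniqueDiffOn ℝ s) (ht : t ∈ s) :
    HasDerivWithinAt (derivWithin g s) (iteratedDerivWithin 2 g s t) s t := by
  rw [iteratedDerivWithin_eq_iterate]
  exact ((hg.derivWithin hs (by norm_num)).differentiableOn one_ne_zero t ht).hasDerivWithinAt

variable {g : ℝ → E} {a b M : ℝ}

theorem norm_sub_sub_smul_derivWithin_le (hab : a < b) (hg : ContDiffOn ℝ 2 g (Icc a b))
    (hM : ∀ t ∈ Icc a b, ‖iteratedDerivWithin 2 g (Icc a b) t‖ ≤ M) :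
    ‖g b - g a - (b - a) • derivWithin g (Icc a b) a‖ ≤ M * (b - a) ^ 2 / 2 := by
  set g' := derivWithin g (Icc a b)
  have hg' : ∀ t ∈ Icc a b, HasDerivWithinAt (fun s ↦ g' s - g' a)
      (iteratedDerivWithin 2 g (Icc a b) t) (Icc a b) t := fun t ht ↦
    (hg.hasDerivWithinAt_derivWithin (uniqueDiffOn_Icc hab) ht).sub_const _
  have hg'_bound := norm_le_of_hasDerivWithinAt_of_norm_le_mul_pow (n := 0) hg' (sub_self _)
    (by simpa using hM)
  have hremainder : ∀ t ∈ Icc a b, HasDerivWithinAt (fun s ↦ g s - g a - (s - a) • g' a)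
      (g' t - g' a) (Icc a b) t := by
    intro t ht
    have := (((hg.differentiableOn two_ne_zero t ht).hasDerivWithinAt.sub_const (g a)).fun_sub
      (((hasDerivWithinAt_id t _).sub_const a).smul_const (g' a)))
    simpa using this
  have := norm_le_of_hasDerivWithinAt_of_norm_le_mul_pow hremainder (by simp) hg'_bound b
    (right_mem_Icc.2 hab.le)
  convert this using 1
  norm_num
  ring

theorem norm_integral_sub_trapezoid_le [CompleteSpace E] (hab : a < b)
    (hg : ContDiffOn ℝ 2 g (Icc a b))
    (hM : ∀ t ∈ Icc a b, ‖iteratedDerivWithin 2 g (Icc a b) t‖ ≤ M) :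
    ‖(∫ t in a..b, g t) - ((b - a) / 2) • (g a + g b)‖ ≤ M * (b - a) ^ 3 / 12 := by
  set g' := derivWithin g (Icc a b)
  set g'' := iteratedDerivWithin 2 g (Icc a b)
  have hg_deriv (t : ℝ) (ht : t ∈ Icc a b) : HasDerivWithinAt g (g' t) (Icc a b) t :=
    (hg.differentiableOn two_ne_zero t ht).hasDerivWithinAt
  have hslope (t : ℝ) : HasDerivWithinAt (fun s : ℝ ↦ (s - a) / 2) (1 / 2) (Icc a b) t :=
    ((hasDerivWithinAt_id t _).sub_const a).div_const 2
  -- `F t` is the derivative in `t` of the trapezoid error on `[a, t]`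
  set F : ℝ → E := fun t ↦ (1 / 2 : ℝ) • (g t - g a) - ((t - a) / 2) • g' t
  have hF (t : ℝ) (ht : t ∈ Icc a b) :
      HasDerivWithinAt F (-(((t - a) / 2) • g'' t)) (Icc a b) t := by
    refine (((hg_deriv t ht).sub_const (g a)).const_smul (1 / 2 : ℝ)).fun_sub
      ((hslope t).smul (hg.hasDerivWithinAt_derivWithin (uniqueDiffOn_Icc hab) ht))
      |>.congr_deriv ?_
    module
  have hF_bound := norm_le_of_hasDerivWithinAt_of_norm_le_mul_pow (C := M / 2) (n := 1) hF
    (by simp [F]) (fun t ht ↦ by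
      rw [norm_neg, norm_smul, Real.norm_of_nonneg (by linarith [ht.1])]
      nlinarith [hM t ht, ht.1, norm_nonneg (g'' t)])
  have hE (t : ℝ) (ht : t ∈ Icc a b) : HasDerivWithinAt
      (fun s ↦ (∫ r in a..s, g r) - ((s - a) / 2) • (g a + g s)) (F t) (Icc a b) t := by
    -- the instance `FTCFilter t (𝓝[Icc a b] t) _` needs `Fact (t ∈ Icc a b)`
    have := Fact.mk ht
    have hint : HasDerivWithinAt (fun s ↦ ∫ r in a..s, g r) (g t) (Icc a b) t :=
      integral_hasDerivWithinAt_right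
        ((hg.continuousOn.mono (Icc_subset_Icc le_rfl ht.2)).intervalIntegrable_of_Icc ht.1)
        (hg.continuousOn.stronglyMeasurableAtFilter_nhdsWithin measurableSet_Icc t)
        (hg.continuousOn.continuousWithinAt ht)
    refine hint.fun_sub ((hslope t).smul ((hg_deriv t ht).const_add (g a))) |>.congr_deriv ?_
    module
  have := norm_le_of_hasDerivWithinAt_of_norm_le_mul_pow hE (by simp) hF_bound b
    (right_mem_Icc.2 hab.le)
  convert this using 1
  norm_num
  ring

end

/-- Second-order accuracy of the predictor–corrector flux: if `f` is Lipschitz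
in both arguments with constant `L`, `u, v` are twice continuously
differentiable on `[t₀, t₀ + Δt]` with second derivatives bounded by `M₂`, and
`τ ↦ f (u τ, v τ)` is twice continuously differentiable there with second
derivative bounded by `M`, then the average of `f` at the old values and at the
explicit-Euler predicted values approximates the time-averaged flux
`(1/Δt) ∫ f (u τ, v τ) dτ` with error at most `(M/12) Δt² + (L M₂ / 2) Δt²`. -/
theorem stmt_0 {E : Type*} [NormedAddCommGroup E] [NormedSpace ℝ E]
    [FiniteDimensional ℝ E]
    (f : E × E → E) (L : ℝ) (hL : 0 ≤ L)
    (hf : ∀ a a' b b' : E, ‖f (a, b) - f (a', b')‖ ≤ L * (‖a - a'‖ + ‖b - b'‖))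
    (t₀ Δt : ℝ) (hΔt : 0 < Δt)
    (u v : ℝ → E) (M₂ M : ℝ)
    (hu : ContDiffOn ℝ 2 u (Set.Icc t₀ (t₀ + Δt)))
    (hv : ContDiffOn ℝ 2 v (Set.Icc t₀ (t₀ + Δt)))
    (hu2 : ∀ τ ∈ Set.Icc t₀ (t₀ + Δt),
      ‖iteratedDerivWithin 2 u (Set.Icc t₀ (t₀ + Δt)) τ‖ ≤ M₂)
    (hv2 : ∀ τ ∈ Set.Icc t₀ (t₀ + Δt),
      ‖iteratedDerivWithin 2 v (Set.Icc t₀ (t₀ + Δt)) τ‖ ≤ M₂)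
    (hφ : ContDiffOn ℝ 2 (fun τ => f (u τ, v τ)) (Set.Icc t₀ (t₀ + Δt)))
    (hφ2 : ∀ τ ∈ Set.Icc t₀ (t₀ + Δt),
      ‖iteratedDerivWithin 2 (fun τ => f (u τ, v τ)) (Set.Icc t₀ (t₀ + Δt)) τ‖ ≤ M)
    (u₁ v₁ : E)
    (hu₁ : u₁ = u t₀ + Δt • derivWithin u (Set.Icc t₀ (t₀ + Δt)) t₀)
    (hv₁ : v₁ = v t₀ + Δt • derivWithin v (Set.Icc t₀ (t₀ + Δt)) t₀) :
    ‖(1 / 2 : ℝ) • (f (u t₀, v t₀) + f (u₁, v₁))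
        - (1 / Δt) • ∫ τ in t₀..(t₀ + Δt), f (u τ, v τ)‖
      ≤ (M / 12) * Δt ^ 2 + (L * M₂ / 2) * Δt ^ 2 := by
  have ht₀ : t₀ < t₀ + Δt := lt_add_of_pos_right t₀ hΔt
  have trapezoid := norm_integral_sub_trapezoid_le ht₀ hφ hφ2
  have euler_u := norm_sub_sub_smul_derivWithin_le ht₀ hu hu2
  have euler_v := norm_sub_sub_smul_derivWithin_le ht₀ hv hv2
  rw [add_sub_cancel_left] at trapezoid euler_u euler_v
  set φ₀ := f (u t₀, v t₀)
  set φ₁ := f (u (t₀ + Δt), v (t₀ + Δt))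
  set I := ∫ τ in t₀..(t₀ + Δt), f (u τ, v τ)
  have predictor : ‖f (u₁, v₁) - φ₁‖ ≤ L * (M₂ * Δt ^ 2 / 2 + M₂ * Δt ^ 2 / 2) := by
    refine (hf _ _ _ _).trans (mul_le_mul_of_nonneg_left (add_le_add ?_ ?_) hL)
    · rwa [norm_sub_rev, hu₁, ← sub_sub]
    · rwa [norm_sub_rev, hv₁, ← sub_sub]
  calc ‖(1 / 2 : ℝ) • (φ₀ + f (u₁, v₁)) - (1 / Δt) • I‖
      = ‖(1 / 2 : ℝ) • (f (u₁, v₁) - φ₁) - (1 / Δt) • (I - (Δt / 2) • (φ₀ + φ₁))‖ := by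
        congr 1
        match_scalars <;> field_simp
        ring
    _ ≤ 1 / 2 * ‖f (u₁, v₁) - φ₁‖ + 1 / Δt * ‖I - (Δt / 2) • (φ₀ + φ₁)‖ := by
        refine (norm_sub_le _ _).trans_eq ?_
        rw [norm_smul, norm_smul, Real.norm_of_nonneg (by norm_num),
          Real.norm_of_nonneg (by positivity)]
    _ ≤ 1 / 2 * (L * (M₂ * Δt ^ 2 / 2 + M₂ * Δt ^ 2 / 2)) + 1 / Δt * (M * Δt ^ 3 / 12) := by
        gcongr
    _ = (M / 12) * Δt ^ 2 + (L * M₂ / 2) * Δt ^ 2 := by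
        field_simp
        ring
end

section
/- Let E = ℝ^m, let U : E → ℝ be convex, let λ > 0, and let u, fu, g₋, g₊, h₋, h₊ ∈ E and F, G₋, G₊, H₋, H₊ ∈ ℝ be given. Define the half-cell entropy productions s₋ = U(u + 2λ(g₋ − fu)) − U(u) + 2λ(F − G₋), p₋ = U(u + 2λ(h₋ − fu)) − U(u) + 2λ(F − H₋), s₊ = U(u + 2λ(fu − g₊)) − U(u) + 2λ(G₊ − F), p₊ = U(u + 2λ(fu − h₊)) − U(u) + 2λ(H₊ − F). Let α₋, α₊ ∈ [0,1] and define the blended fluxes f_{α₋} = α₋ g₋ + (1−α₋) h₋, f_{α₊} = α₊ g₊ + (1−α₊) h₊ and blended entropy fluxes F_{α₋} = α₋ G₋ + (1−α₋) H₋, F_{α₊} = α₊ G₊ + (1−α₊) H₊. If Condition F holds, i.e. α₋ s₋ + (1−α₋) p₋ ≤ 0 and α₊ s₊ + (1−α₊) p₊ ≤ 0, then the fully discrete per-cell entropy inequality holds: U(u + λ(f_{α₋} − f_{α₊})) − U(u) + λ(F_{α₊} − F_{α₋}) ≤ 0. -/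
/-!
The update `u + λ (f_{α₋} - f_{α₊})` is the midpoint of the two half-cell updates
`u + 2λ (f_{α₋} - f(u))` and `u + 2λ (f(u) - f_{α₊})`, so by convexity of `U` the cell entropy
production is at most the mean of the two half-cell productions. Each half-cell update is in turn the
`α`-convex combination of the low- and high-order half-cell updates, so again by convexity its
production is at most the combination appearing in Condition F, which is nonpositive.
-/

open Set

variable {E : Type*} [AddCommGroup E] [Module ℝ E]

/-- Half-cell entropy production with step `c`: `c = 2λ` at the left interface, `c = -2λ` at the
right one. -/
def entropyProduction (U : E → ℝ) (u fu : E) (F c : ℝ) (g : E) (G : ℝ) : ℝ :=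
  U (u + c • (g - fu)) - U u + c * (F - G)

theorem entropyProduction_neg (U : E → ℝ) (u fu : E) (F c : ℝ) (g : E) (G : ℝ) :
    entropyProduction U u fu F (-c) g G = U (u + c • (fu - g)) - U u + c * (G - F) := by
  rw [entropyProduction, show -c • (g - fu) = c • (fu - g) by module]
  ring

theorem entropyProduction_convexComb_le {U : E → ℝ} (hU : ConvexOn ℝ univ U) (u fu : E)
    (F c : ℝ) {α : ℝ} (hα₀ : 0 ≤ α) (hα₁ : α ≤ 1) (g h : E) (G H : ℝ) :
    entropyProduction U u fu F c (α • g + (1 - α) • h) (α * G + (1 - α) * H) ≤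
      α * entropyProduction U u fu F c g G + (1 - α) * entropyProduction U u fu F c h H := by
  have hsplit : u + c • (α • g + (1 - α) • h - fu) =
      α • (u + c • (g - fu)) + (1 - α) • (u + c • (h - fu)) := by module
  have hconv := hU.2 (mem_univ (u + c • (g - fu))) (mem_univ (u + c • (h - fu))) hα₀
    (sub_nonneg.2 hα₁) (add_sub_cancel α 1)
  simp only [entropyProduction, hsplit, smul_eq_mul] at hconv ⊢
  linarith

theorem cell_entropyProduction_le_half_add {U : E → ℝ} (hU : ConvexOn ℝ univ U) (u fu : E)
    (F lam : ℝ) (a b : E) (A B : ℝ) :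
    U (u + lam • (a - b)) - U u + lam * (B - A) ≤
      (entropyProduction U u fu F (2 * lam) a A
        + entropyProduction U u fu F (-(2 * lam)) b B) / 2 := by
  have hmid : u + lam • (a - b) =
      (1 / 2 : ℝ) • (u + (2 * lam) • (a - fu)) + (1 / 2 : ℝ) • (u + -(2 * lam) • (b - fu)) := by
    module
  have hconv := hU.2 (mem_univ (u + (2 * lam) • (a - fu))) (mem_univ (u + -(2 * lam) • (b - fu)))
    (by norm_num : (0 : ℝ) ≤ 1 / 2) (by norm_num : (0 : ℝ) ≤ 1 / 2) (by norm_num)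
  simp only [entropyProduction, hmid, smul_eq_mul] at hconv ⊢
  linarith

theorem stmt_2_general (m : ℕ) (U : (Fin m → ℝ) → ℝ) (hU : ConvexOn ℝ Set.univ U)
    (lam : ℝ)
    (u fu gm gp hm hp : Fin m → ℝ) (F Gm Gp Hm Hp : ℝ)
    (sm pm sp pp : ℝ)
    (hsm : sm = U (u + (2 * lam) • (gm - fu)) - U u + 2 * lam * (F - Gm))
    (hpm : pm = U (u + (2 * lam) • (hm - fu)) - U u + 2 * lam * (F - Hm))
    (hsp : sp = U (u + (2 * lam) • (fu - gp)) - U u + 2 * lam * (Gp - F))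
    (hpp : pp = U (u + (2 * lam) • (fu - hp)) - U u + 2 * lam * (Hp - F))
    (αm αp : ℝ) (hαm : αm ∈ Set.Icc (0 : ℝ) 1) (hαp : αp ∈ Set.Icc (0 : ℝ) 1)
    (hcondm : αm * sm + (1 - αm) * pm ≤ 0)
    (hcondp : αp * sp + (1 - αp) * pp ≤ 0) :
    U (u + lam • ((αm • gm + (1 - αm) • hm) - (αp • gp + (1 - αp) • hp))) - U u
      + lam * ((αp * Gp + (1 - αp) * Hp) - (αm * Gm + (1 - αm) * Hm)) ≤ 0 := by
  change sm = entropyProduction U u fu F (2 * lam) gm Gm at hsm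
  change pm = entropyProduction U u fu F (2 * lam) hm Hm at hpm
  rw [← entropyProduction_neg] at hsp hpp
  subst hsm hpm hsp hpp
  have hleft := entropyProduction_convexComb_le hU u fu F (2 * lam) hαm.1 hαm.2 gm hm Gm Hm
  have hright := entropyProduction_convexComb_le hU u fu F (-(2 * lam)) hαp.1 hαp.2 gp hp Gp Hp
  have hcell := cell_entropyProduction_le_half_add hU u fu F lam
    (αm • gm + (1 - αm) • hm) (αp • gp + (1 - αp) • hp) (αm * Gm + (1 - αm) * Hm)
    (αp * Gp + (1 - αp) * Hp)
  linarith

/-- Fully discrete per-cell entropy inequality for the GT blending scheme: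
if the blending parameters `α₋, α₊ ∈ [0,1]` satisfy Condition F, i.e.
`α₋ s₋ + (1-α₋) p₋ ≤ 0` and `α₊ s₊ + (1-α₊) p₊ ≤ 0` for the half-cell entropy
productions of the low-order (`g`, `G`) and high-order (`h`, `H`) fluxes, then
the update with the blended flux dissipates the convex entropy `U`. -/
theorem stmt_2 (m : ℕ) (U : (Fin m → ℝ) → ℝ) (hU : ConvexOn ℝ Set.univ U)
    (lam : ℝ) (hlam : 0 < lam)
    (u fu gm gp hm hp : Fin m → ℝ) (F Gm Gp Hm Hp : ℝ)
    (sm pm sp pp : ℝ)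
    (hsm : sm = U (u + (2 * lam) • (gm - fu)) - U u + 2 * lam * (F - Gm))
    (hpm : pm = U (u + (2 * lam) • (hm - fu)) - U u + 2 * lam * (F - Hm))
    (hsp : sp = U (u + (2 * lam) • (fu - gp)) - U u + 2 * lam * (Gp - F))
    (hpp : pp = U (u + (2 * lam) • (fu - hp)) - U u + 2 * lam * (Hp - F))
    (αm αp : ℝ) (hαm : αm ∈ Set.Icc (0 : ℝ) 1) (hαp : αp ∈ Set.Icc (0 : ℝ) 1)
    (hcondm : αm * sm + (1 - αm) * pm ≤ 0)
    (hcondp : αp * sp + (1 - αp) * pp ≤ 0) :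
    U (u + lam • ((αm • gm + (1 - αm) • hm) - (αp • gp + (1 - αp) • hp))) - U u
      + lam * ((αp * Gp + (1 - αp) * Hp) - (αm * Gm + (1 - αm) * Hm)) ≤ 0 :=
  stmt_2_general m U hU lam u fu gm gp hm hp F Gm Gp Hm Hp sm pm sp pp hsm hpm hsp hpp αm αp hαm hαp
    hcondm hcondp
end
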